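/- arXiv:2402.01084 — 5 statements merged into one kernel-verified Lean document; each statement's English description precedes it below -/
import Mathlib

section
/- Under hereditary distributional constraints, every weakly nonwasteful matching satisfies the no vacant college property. -/
/-- The distributional-constraint function `f` (on occupancy vectors) is
hereditary: the zero vector is feasible and feasibility is downward closed. -/
def HeredF {C : Type*} (f : (C → ℕ) → Prop) : Prop :=
  f 0 ∧ ∀ ν ν' : C → ℕ, ν' ≤ ν → f ν → f ν'

/-- The occupancy vector `ν(Y)` of a set of contracts: the number of students
matched to each college. -/
noncomputable def occVec {S C : Type*} (Y : Set (S × C)) : C → ℕ :=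
  fun c => Set.ncard {s : S | (s, c) ∈ Y}

/-- `Y` is a matching: every contract in it is acceptable for its student and
each student has at most one contract. -/
def IsMatching {S C : Type*} (acc : S → C → Prop) (Y : Set (S × C)) : Prop :=
  (∀ s c, (s, c) ∈ Y → acc s c) ∧ ∀ s c c', (s, c) ∈ Y → (s, c') ∈ Y → c = c'

/-- `c ≻ₛ Y_s`: student `s` strictly prefers college `c` to her assignment in
`Y` (either she is unmatched, or she prefers `c` to her current college). -/
def PrefOver {S C : Type*} (spref : S → C → C → Prop) (Y : Set (S × C)) (s : S) (c : C) : Prop :=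
  (∀ c', (s, c') ∉ Y) ∨ ∃ c', (s, c') ∈ Y ∧ spref s c c'

/-- Student `s` claims an empty seat of college `c` in `Y`: `(s,c)` is
acceptable for `s`, `c ≻ₛ Y_s`, and `(Y \ Y_s) ∪ {(s,c)}` is feasible. -/
def Claims {S C : Type*} (acc : S → C → Prop) (spref : S → C → C → Prop)
    (f : (C → ℕ) → Prop) (Y : Set (S × C)) (s : S) (c : C) : Prop :=
  acc s c ∧ PrefOver spref Y s c ∧
    f (occVec ((Y \ {p : S × C | p.1 = s}) ∪ {(s, c)}))

/-- Under hereditary distributional constraints, every weakly nonwasteful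
matching satisfies the no vacant college property. -/
theorem stmt5 {S C : Type*} [Finite S]
    (acc : S → C → Prop) (spref : S → C → C → Prop) (f : (C → ℕ) → Prop)
    (hH : HeredF f)
    (Y : Set (S × C)) (hY : IsMatching acc Y) (hfeas : f (occVec Y))
    -- `Y` is weakly nonwasteful: no student strongly claims an empty seat
    (hweak : ∀ s c, ¬ (acc s c ∧ PrefOver spref Y s c ∧ f (occVec (Y ∪ {(s, c)})))) :
    -- no vacant college property
    ∀ s c, Claims acc spref f Y s c → (∃ c', (s, c') ∈ Y) ∨ ∃ s', (s', c) ∈ Y := by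
  intro s c ⟨hacc, hpref, hf⟩
  left
  by_contra h
  push_neg at h
  apply hweak s c
  refine ⟨hacc, hpref, ?_⟩
  have hEq : Y \ {p : S × C | p.1 = s} = Y := by
    ext ⟨a, b⟩
    simp only [Set.mem_diff, Set.mem_setOf_eq, and_iff_left_iff_imp]
    intro hab hs
    subst hs
    exact h b hab
  rwa [hEq] at hf
end

section
/- No mechanism can simultaneously satisfy fairness, strategyproofness, and cut-off nonwastefulness under hereditary M♮-convex set constraints. Concretely, in the market with students S = {s_1, s_2}, colleges C = {c_1, c_2}, college preferences s_2 ≻_{c_1} s_1 and s_1 ≻_{c_2} s_2, and feasible vectors F = {(0,0),(1,0),(0,1)} (regional quota |Y_{c_1}| + |Y_{c_2}| ≤ 1), any mechanism that always outputs a fair and cut-off nonwasteful matching admits a student with a profitable preference misreport. -/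
/-! At the profile `(c₁ ≻ c₂, c₂)` fairness and cut-off nonwastefulness force `s₁ ↦ c₁`, and
symmetrically `(c₁, c₂ ≻ c₁)` forces `s₂ ↦ c₂`. At `(c₁, c₂)` the quota leaves at most one
student matched: if `s₁` gets `c₁`, then `s₂` gains by reporting `c₂ ≻ c₁`; otherwise `s₁`
gains by reporting `c₁ ≻ c₂`. -/

/-- A student's strict preference over colleges together with the outside
option `none` (being unmatched). -/
structure StudPref (C : Type*) where
  rel : Option C → Option C → Prop
  irrefl : ∀ a, ¬ rel a a
  trans : ∀ a b c, rel a b → rel b c → rel a c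
  total : ∀ a b, a ≠ b → rel a b ∨ rel b a

/-- Colleges' preferences in the counterexample market:
`c₁ : s₂ ≻ s₁` and `c₂ : s₁ ≻ s₂`. -/
def cpref8 (c s s' : Fin 2) : Prop :=
  (c = 0 ∧ s = 1 ∧ s' = 0) ∨ (c = 1 ∧ s = 0 ∧ s' = 1)

/-- Feasibility for the regional quota `|Y_{c₁}| + |Y_{c₂}| ≤ 1`
(feasible vectors `(0,0), (1,0), (0,1)`): at most one student is matched. -/
def Feas8 (μ : Fin 2 → Option (Fin 2)) : Prop := μ 0 = none ∨ μ 1 = none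

/-- Student `s` claims an empty seat of college `c`: `c` is acceptable to `s`,
`s` prefers `c` to her current match, and moving `s` to `c` is feasible. -/
def Claim8 (p : Fin 2 → StudPref (Fin 2)) (μ : Fin 2 → Option (Fin 2))
    (s c : Fin 2) : Prop :=
  (p s).rel (some c) none ∧ (p s).rel (some c) (μ s) ∧
    Feas8 (Function.update μ s (some c))

namespace StudPref

variable {C : Type*}

def ofRank (r : Option C → ℕ) (hr : Function.Injective r) : StudPref C where
  rel x y := r x < r y
  irrefl _ := lt_irrefl _
  trans _ _ _ := lt_trans
  total _ _ hxy := lt_or_gt_of_ne (hr.ne hxy)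

@[simp]
lemma ofRank_rel (r : Option C → ℕ) (hr : Function.Injective r) (x y : Option C) :
    (ofRank r hr).rel x y ↔ r x < r y := Iff.rfl

end StudPref

open StudPref

/-! Preferences named by their acceptable colleges, best first; college `cᵢ` is `i - 1 : Fin 2`. -/

abbrev pref₁₂ : StudPref (Fin 2) := ofRank (fun x => x.elim 2 ![0, 1]) (by decide)
abbrev pref₁ : StudPref (Fin 2) := ofRank (fun x => x.elim 1 ![0, 2]) (by decide)
abbrev pref₂ : StudPref (Fin 2) := ofRank (fun x => x.elim 1 ![2, 0]) (by decide)
abbrev pref₂₁ : StudPref (Fin 2) := ofRank (fun x => x.elim 2 ![1, 0]) (by decide)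

def IsIndividuallyRational (p : Fin 2 → StudPref (Fin 2)) (μ : Fin 2 → Option (Fin 2)) : Prop :=
  ∀ s c, μ s = some c → (p s).rel (some c) none

def NoJustifiedEnvy (p : Fin 2 → StudPref (Fin 2)) (μ : Fin 2 → Option (Fin 2)) : Prop :=
  ∀ s s' c, μ s' = some c → (p s).rel (some c) none → (p s).rel (some c) (μ s) →
    cpref8 c s s' → False

def IsCutoffNonwasteful (p : Fin 2 → StudPref (Fin 2)) (μ : Fin 2 → Option (Fin 2)) : Prop :=
  ∀ s c, Claim8 p μ s c →
    ∃ s', s' ≠ s ∧ (p s').rel (some c) (μ s') ∧ cpref8 c s' s ∧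
      ¬ Feas8 (Function.update μ s' (some c))

lemma ne_of_cpref8 {c s s' : Fin 2} (h : cpref8 c s s') : s ≠ s' := by
  unfold cpref8 at h
  omega

lemma feas8_iff {s t : Fin 2} (hst : s ≠ t) {μ : Fin 2 → Option (Fin 2)} :
    Feas8 μ ↔ μ s = none ∨ μ t = none := by
  unfold Feas8
  obtain ⟨rfl, rfl⟩ | ⟨rfl, rfl⟩ : s = 0 ∧ t = 1 ∨ s = 1 ∧ t = 0 := by omega
  · rfl
  · exact or_comm

/-- If `t` held `c'`, `s` would have justified envy; otherwise a seat at `c` is left for `s`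
to claim, and only `t`, to whom `c` is unacceptable, could block the claim. -/
theorem eq_some_of_top_of_unacceptable_to_other {p : Fin 2 → StudPref (Fin 2)}
    {μ : Fin 2 → Option (Fin 2)} (hfeas : Feas8 μ) (hrat : IsIndividuallyRational p μ)
    (hfair : NoJustifiedEnvy p μ) (hcut : IsCutoffNonwasteful p μ) {s t c c' : Fin 2}
    (hc : (p s).rel (some c) none) (hcc' : (p s).rel (some c) (some c'))
    (hc' : (p s).rel (some c') none) (ht : ¬ (p t).rel (some c) none)
    (hprio : cpref8 c' s t) : μ s = some c := by
  have hst := ne_of_cpref8 hprio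
  have hc'c : c' ≠ c := by rintro rfl; exact (p s).irrefl _ hcc'
  have hclaim : μ t = none → μ s = some c := by
    intro hμt
    by_contra hμs
    have hprefers : (p s).rel (some c) (μ s) := by
      rcases hμs' : μ s with _ | d
      · exact hc
      · obtain rfl : d = c' := by
          have : d ≠ c := by rintro rfl; exact hμs hμs'
          omega
        exact hcc'
    have hfeas_claim : Feas8 (Function.update μ s (some c)) :=
      (feas8_iff hst).2 (Or.inr (by rwa [Function.update_of_ne hst.symm]))
    obtain ⟨s', hs's, hrel, -, -⟩ := hcut s c ⟨hc, hprefers, hfeas_claim⟩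
    obtain rfl : s' = t := by omega
    exact ht (hμt ▸ hrel)
  rcases hμt : μ t with _ | d
  · exact hclaim hμt
  · obtain rfl | rfl : d = c ∨ d = c' := by omega
    · exact absurd (hrat t d hμt) ht
    · have hμs : μ s = none := ((feas8_iff hst).1 hfeas).resolve_right (by simp [hμt])
      exact (hfair s t d hμt hc' (hμs ▸ hc') hprio).elim

/-- No mechanism is simultaneously fair, strategyproof and cut-off nonwasteful
under hereditary M♮-convex set constraints: in the two-student, two-college
market with regional quota 1, any mechanism always producing a feasible, fair
and cut-off nonwasteful matching admits a profitable misreport. -/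
theorem stmt8 (M : (Fin 2 → StudPref (Fin 2)) → (Fin 2 → Option (Fin 2)))
    (hfeas : ∀ p, Feas8 (M p))
    (hvalid : ∀ p s c, M p s = some c → (p s).rel (some c) none)
    (hfair : ∀ p s s' c, M p s' = some c → (p s).rel (some c) none →
      (p s).rel (some c) (M p s) → cpref8 c s s' → False)
    (hcutoff : ∀ p s c, Claim8 p (M p) s c →
      ∃ s', s' ≠ s ∧ (p s').rel (some c) (M p s') ∧ cpref8 c s' s ∧
        ¬ Feas8 (Function.update (M p) s' (some c))) :
    -- some student has a profitable preference misreport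
    ∃ (p : Fin 2 → StudPref (Fin 2)) (s : Fin 2) (q : StudPref (Fin 2)),
      (p s).rel (M (Function.update p s q) s) (M p s) := by
  have top (p : Fin 2 → StudPref (Fin 2)) :=
    @eq_some_of_top_of_unacceptable_to_other p (M p) (hfeas p) (hvalid p) (hfair p) (hcutoff p)
  have h₁ : M ![pref₁₂, pref₂] 0 = some 0 := top _ (c' := 1) (t := 1)
    (by simp) (by simp) (by simp) (by simp) (by simp [cpref8])
  have h₂ : M ![pref₁, pref₂₁] 1 = some 1 := top _ (c' := 0) (t := 0)
    (by simp) (by simp) (by simp) (by simp) (by simp [cpref8])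
  by_cases h : M ![pref₁, pref₂] 0 = some 0
  · have hnone : M ![pref₁, pref₂] 1 = none := (hfeas _).resolve_left (by simp [h])
    refine ⟨![pref₁, pref₂], 1, pref₂₁, ?_⟩
    have hupd : Function.update ![pref₁, pref₂] 1 pref₂₁ = ![pref₁, pref₂₁] := by
      funext i; fin_cases i <;> rfl
    rw [hupd, h₂, hnone]
    simp
  · refine ⟨![pref₁, pref₂], 0, pref₁₂, ?_⟩
    have hupd : Function.update ![pref₁, pref₂] 0 pref₁₂ = ![pref₁₂, pref₂] := by
      funext i; fin_cases i <;> rfl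
    rw [hupd, h₁]
    rcases hx : M ![pref₁, pref₂] 0 with _ | x
    · simp
    · fin_cases x <;> simp_all
end

section
/- Under hereditary constraints, GDA run with the restricted feasibility f' (where f'(ν) = 0 iff ν ∈ {0} ∪ {χ_i : f(χ_i) = 0}) outputs a matching that is feasible with respect to the original constraint f and satisfies the no empty matching property: if there exists an acceptable contract (s,c) with f(χ_{index(c)}) = 0, then the resulting HM-stable (with respect to f') matching is nonempty. -/
/-! `f'` only admits `0` and the unit vectors that `f` admits, all of which are `f`-feasible.
If the matching were empty, an acceptable contract `x` with `f(χ_x) = 0` would be chosen by the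
students from `{x}`, and by the colleges too, since `{x}` is `f'`-feasible and outweighs `∅`;
so `x` would block the empty matching. -/

/-- The `i`-th unit vector. -/
def chiF {m : ℕ} (i : Fin m) : Fin m → ℕ := fun k => if k = i then 1 else 0

/-- Occupancy vector of a finite set of contracts. -/
def nuF {S : Type*} {m : ℕ} [DecidableEq S] (Z : Finset (S × Fin m)) : Fin m → ℕ :=
  fun c => (Z.filter (fun x => x.2 = c)).card

/-- The restricted feasibility `f'`: `f'(ν) = 0` iff `ν ∈ {0} ∪ {χ_i : f(χ_i) = 0}`. -/
def FPrime {m : ℕ} (f : (Fin m → ℕ) → Prop) (ν : Fin m → ℕ) : Prop :=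
  ν = 0 ∨ ∃ i : Fin m, f (chiF i) ∧ ν = chiF i

-- The students' choice function.
open scoped Classical in
noncomputable def ChS {S C : Type*} (sAcc : S → C → Prop) (spref : S → C → C → Prop)
    (Z : Finset (S × C)) : Finset (S × C) :=
  Z.filter (fun x => sAcc x.1 x.2 ∧
    ∀ x' ∈ Z, x'.1 = x.1 → sAcc x.1 x'.2 → x' ≠ x → spref x.1 x.2 x'.2)

theorem nuF_singleton {S : Type*} {m : ℕ} [DecidableEq S] (x : S × Fin m) :
    nuF {x} = chiF x.2 := by
  funext c
  rw [nuF, chiF, Finset.filter_singleton]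
  by_cases h : x.2 = c
  · simp [h]
  · simp [h, Ne.symm h]

theorem FPrime.of_zero {m : ℕ} {f : (Fin m → ℕ) → Prop} {ν : Fin m → ℕ} (hf0 : f 0)
    (h : FPrime f ν) : f ν := by
  obtain rfl | ⟨i, hfi, rfl⟩ := h
  exacts [hf0, hfi]

theorem mem_ChS_singleton {S C : Type*} {sAcc : S → C → Prop} {spref : S → C → C → Prop}
    {x : S × C} (hx : sAcc x.1 x.2) : x ∈ ChS sAcc spref {x} := by
  simp [ChS, hx]

theorem eq_singleton_of_sum_weight_max {α : Type*} {w : α → ℝ} {x : α} {T : Finset α}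
    (hwx : 0 < w x) (hT : T ⊆ {x}) (hmax : {x} ≠ T → ∑ y ∈ {x}, w y < ∑ y ∈ T, w y) :
    T = {x} := by
  by_contra hne
  have hT_empty : T = ∅ := (Finset.subset_singleton_iff.mp hT).resolve_right hne
  have := hmax (Ne.symm hne)
  simp only [hT_empty, Finset.sum_singleton, Finset.sum_empty] at this
  linarith

theorem stmt10_general {S : Type*} {m : ℕ} [DecidableEq S]
    (X : Finset (S × Fin m))
    (sAcc : S → Fin m → Prop) (spref : S → Fin m → Fin m → Prop)
    (w : S × Fin m → ℝ) (hwpos : ∀ x, 0 < w x)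
    (f : (Fin m → ℕ) → Prop)
    (hH : f 0 ∧ ∀ ν ν' : Fin m → ℕ, ν' ≤ ν → f ν → f ν')
    (ChC : Finset (S × Fin m) → Finset (S × Fin m))
    (hChC : ∀ Z, ChC Z ⊆ Z ∧ FPrime f (nuF (ChC Z)) ∧
      ∀ Z' ⊆ Z, FPrime f (nuF Z') → Z' ≠ ChC Z → ∑ x ∈ Z', w x < ∑ x ∈ ChC Z, w x)
    (Y : Finset (S × Fin m))
    (hYC : Y = ChC Y)
    (hstab : ∀ x ∈ X, x ∉ Y →
      ¬ (x ∈ ChS sAcc spref (insert x Y) ∧ x ∈ ChC (insert x Y))) :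
    f (nuF Y) ∧ ∀ x ∈ X, sAcc x.1 x.2 → f (chiF x.2) → Y ≠ ∅ := by
  refine ⟨FPrime.of_zero hH.1 (hYC ▸ (hChC Y).2.1), ?_⟩
  rintro x hxX hacc hfx rfl
  have hx_feasible : FPrime f (nuF {x}) := Or.inr ⟨x.2, hfx, nuF_singleton x⟩
  have hChC_x : ChC {x} = {x} :=
    eq_singleton_of_sum_weight_max (hwpos x) (hChC {x}).1
      ((hChC {x}).2.2 {x} subset_rfl hx_feasible)
  apply hstab x hxX (Finset.notMem_empty x)
  rw [Finset.insert_empty, hChC_x]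
  exact ⟨mem_ChS_singleton hacc, Finset.mem_singleton_self x⟩

/-- Under a hereditary constraint `f`, GDA run with the restricted feasibility
`f'` outputs a matching feasible for `f`, and if some acceptable contract
`(s,c)` has `f(χ_c) = 0`, the resulting HM-stable (w.r.t. `f'`) matching is
nonempty (no empty matching property). -/
theorem stmt10 {S : Type*} {m : ℕ} [DecidableEq S]
    (X : Finset (S × Fin m))
    (sAcc : S → Fin m → Prop) (spref : S → Fin m → Fin m → Prop)
    (w : S × Fin m → ℝ) (hwpos : ∀ x, 0 < w x)
    (f : (Fin m → ℕ) → Prop)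
    (hH : f 0 ∧ ∀ ν ν' : Fin m → ℕ, ν' ≤ ν → f ν → f ν')
    (ChC : Finset (S × Fin m) → Finset (S × Fin m))
    (hChC : ∀ Z, ChC Z ⊆ Z ∧ FPrime f (nuF (ChC Z)) ∧
      ∀ Z' ⊆ Z, FPrime f (nuF Z') → Z' ≠ ChC Z → ∑ x ∈ Z', w x < ∑ x ∈ ChC Z, w x)
    (Y : Finset (S × Fin m)) (hYX : Y ⊆ X)
    -- HM-stability of Y with respect to f'
    (hYS : Y = ChS sAcc spref Y) (hYC : Y = ChC Y)
    (hstab : ∀ x ∈ X, x ∉ Y →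
      ¬ (x ∈ ChS sAcc spref (insert x Y) ∧ x ∈ ChC (insert x Y))) :
    f (nuF Y) ∧ ∀ x ∈ X, sAcc x.1 x.2 → f (chiF x.2) → Y ≠ ∅ :=
  stmt10_general X sAcc spref w hwpos f hH ChC hChC Y hYC hstab
end

section
/- There exists a matching market with n students under hereditary M♮-convex set constraints in which no matching is both nonwasteful and EF-k for any k < n−1. Specifically, with n students and n colleges, cyclic preferences (student s_i ranks colleges c_{i+1}, c_{i+2}, ..., c_n, c_1, ..., c_i in that order; college c_i ranks students s_i, s_{i+1}, ..., s_n, s_1, ..., s_{i−1}), and feasibility f(ν) = 0 iff ν_i ≤ 1 for all i and Σ_i ν_i ≤ n−1, every nonwasteful matching leaves exactly one student unmatched and that student has justified envy toward all n−1 other students. -/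
/- The cyclic market of Example 6, with `n + 1` students `s_0, …, s_n` and
`n + 1` colleges `c_0, …, c_n` (indices modulo `n + 1`).
Student `s_i` ranks colleges by `rankS`: her `r`-th choice is `c_{i+1+r}`
(so `c_{i+1}` is best and `c_i` is worst); college `c_i` ranks students by
`rankC`: its best student is `s_i` and its worst is `s_{i-1}`.
Smaller rank means more preferred. -/

def rankS {n : ℕ} (i c : Fin (n + 1)) : ℕ := (c - i - 1).val

def rankC {n : ℕ} (i s : Fin (n + 1)) : ℕ := (s - i).val

/-- Feasibility: each college accepts at most one student and at most
`n = (n+1) - 1` students are matched in total. -/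
def FeasCyc {n : ℕ} (μ : Fin (n + 1) → Option (Fin (n + 1))) : Prop :=
  (∀ s s' c, μ s = some c → μ s' = some c → s = s') ∧
    (Finset.univ.filter (fun s => μ s ≠ none)).card ≤ n

/-- `c ≻ₛ μ(s)`: student `s` prefers college `c` to her current assignment
(all colleges are acceptable to all students). -/
def POverCyc {n : ℕ} (μ : Fin (n + 1) → Option (Fin (n + 1))) (s c : Fin (n + 1)) : Prop :=
  μ s = none ∨ ∃ c', μ s = some c' ∧ rankS s c < rankS s c'

/-- Nonwastefulness: no student claims an empty seat. -/
def NWCyc {n : ℕ} (μ : Fin (n + 1) → Option (Fin (n + 1))) : Prop :=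
  ∀ s c, ¬ (POverCyc μ s c ∧ FeasCyc (Function.update μ s (some c)))

/-- `s` has justified envy toward `t`. -/
def EnvyCyc {n : ℕ} (μ : Fin (n + 1) → Option (Fin (n + 1))) (s t : Fin (n + 1)) : Prop :=
  ∃ c, μ t = some c ∧ POverCyc μ s c ∧ rankC c s < rankC c t

/-
In a feasible nonwasteful matching at most `n` of the `n + 1` students are matched, so some
student `s₀` is unmatched and some college `c₀` is empty. Nonwastefulness makes every other
student matched (else `s₀` could take `c₀`) and makes every matched student prefer her college
to `c₀`. The student whose favourite is `c₀`, namely `c₀ - 1`, would then have to sit at `c₀`,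
so she is `s₀` and `c₀ = s₀ + 1`. Finally, if `t` prefers her college `c` to `s₀ + 1` then `c`
lies on the cyclic arc from `t + 1` to `s₀`, and on `c`'s cyclic ranking `s₀` comes before `t`.
-/

lemma Fin.val_sub_add_val_cases {m : ℕ} (a b : Fin (m + 1)) :
    (a - b).val + b.val = a.val ∨ (a - b).val + b.val = a.val + (m + 1) := by
  rcases le_or_gt b a with h | h
  · exact .inl (by rw [Fin.coe_sub_iff_le.mpr h]; omega)
  · exact .inr (by rw [Fin.coe_sub_iff_lt.mpr h]; omega)

section CyclicMarket

variable {n : ℕ} {μ : Fin (n + 1) → Option (Fin (n + 1))}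

lemma rankS_injective (i : Fin (n + 1)) : Function.Injective (rankS i) := fun _ _ h =>
  sub_left_injective (sub_left_injective (Fin.ext h))

lemma rankS_eq_zero_iff {i c : Fin (n + 1)} : rankS i c = 0 ↔ c = i + 1 := by
  rw [rankS, Fin.val_eq_zero_iff, sub_sub, sub_eq_zero]

lemma rankC_lt_of_rankS_lt {s t c : Fin (n + 1)} (hts : t ≠ s)
    (h : rankS t c < rankS t (s + 1)) : rankC c s < rankC c t := by
  have hts' := Fin.val_ne_of_ne hts
  have hone : (1 : Fin (n + 1)).val = 1 := by
    rw [Fin.val_one']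
    exact Nat.mod_eq_of_lt (by omega)
  rw [rankS, rankS, show s + 1 - t - 1 = s - t by abel] at h
  unfold rankC
  rcases Fin.val_sub_add_val_cases (c - t) 1 with h₁ | h₁ <;>
  rcases Fin.val_sub_add_val_cases c t with h₂ | h₂ <;>
  rcases Fin.val_sub_add_val_cases s t with h₃ | h₃ <;>
  rcases Fin.val_sub_add_val_cases s c with h₄ | h₄ <;>
  rcases Fin.val_sub_add_val_cases t c with h₅ | h₅ <;>
  omega

def matchedCyc (μ : Fin (n + 1) → Option (Fin (n + 1))) : Finset (Fin (n + 1)) :=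
  Finset.univ.filter (fun s => μ s ≠ none)

lemma matchedCyc_update_some (s c : Fin (n + 1)) :
    matchedCyc (Function.update μ s (some c)) = insert s (matchedCyc μ) := by
  ext x
  by_cases hx : x = s
  all_goals simp [matchedCyc, hx]

namespace FeasCyc

lemma card_matchedCyc_le (hμ : FeasCyc μ) : (matchedCyc μ).card ≤ n := hμ.2

lemma exists_unmatched (hμ : FeasCyc μ) : ∃ s, μ s = none := by
  by_contra! h
  have hall : matchedCyc μ = Finset.univ := Finset.filter_true_of_mem fun s _ => h s
  have := hμ.card_matchedCyc_le
  rw [hall, Finset.card_univ, Fintype.card_fin] at this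
  omega

lemma exists_unused (hμ : FeasCyc μ) : ∃ c, ∀ s, μ s ≠ some c := by
  by_contra! h
  choose student hstudent using h
  have hinj : Function.Injective student := fun c c' hcc' =>
    Option.some_injective _ ((hstudent c).symm.trans (hcc' ▸ hstudent c'))
  have hle := Finset.card_le_card_of_injOn student (s := Finset.univ) (t := matchedCyc μ)
    (fun c _ => by simp [matchedCyc, hstudent c]) hinj.injOn
  rw [Finset.card_univ, Fintype.card_fin] at hle
  exact absurd (hle.trans hμ.card_matchedCyc_le) (by omega)

lemma update_of_unused (hμ : FeasCyc μ) {s c : Fin (n + 1)} (hc : ∀ t, μ t ≠ some c)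
    (hcard : (insert s (matchedCyc μ)).card ≤ n) : FeasCyc (Function.update μ s (some c)) := by
  refine ⟨fun a b c' ha hb => ?_, by rwa [← matchedCyc, matchedCyc_update_some]⟩
  by_cases hA : a = s <;> by_cases hB : b = s
  · rw [hA, hB]
  · subst hA
    simp only [Function.update_self, Function.update_of_ne hB, Option.some_inj] at ha hb
    exact absurd (ha ▸ hb) (hc b)
  · subst hB
    simp only [Function.update_self, Function.update_of_ne hA, Option.some_inj] at ha hb
    exact absurd (hb ▸ ha) (hc a)
  · rw [Function.update_of_ne hA] at ha
    rw [Function.update_of_ne hB] at hb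
    exact hμ.1 a b c' ha hb

end FeasCyc

namespace NWCyc

variable (hnw : NWCyc μ) (hfeas : FeasCyc μ) {s s₀ t c c₀ : Fin (n + 1)}
include hnw hfeas

lemma ne_none_of_ne (hs₀ : μ s₀ = none) (ht : t ≠ s₀) : μ t ≠ none := by
  intro htn
  obtain ⟨c, hc⟩ := hfeas.exists_unused
  refine hnw s₀ c ⟨.inl hs₀, hfeas.update_of_unused hc ?_⟩
  calc (insert s₀ (matchedCyc μ)).card ≤ (Finset.univ.erase t).card := by
        refine Finset.card_le_card fun x hx => ?_
        simp only [matchedCyc, Finset.mem_insert, Finset.mem_filter, Finset.mem_univ,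
          true_and] at hx
        rcases hx with rfl | hx
        · simpa using ht.symm
        · exact Finset.mem_erase.mpr ⟨fun hxt => hx (hxt ▸ htn), Finset.mem_univ x⟩
    _ = n := by simp

lemma rankS_le_of_unused (hsc : μ s = some c) (hc₀ : ∀ t, μ t ≠ some c₀) :
    rankS s c ≤ rankS s c₀ := by
  by_contra! hlt
  refine hnw s c₀ ⟨.inr ⟨c, hsc, hlt⟩, hfeas.update_of_unused hc₀ ?_⟩
  rw [Finset.insert_eq_of_mem (by simp [matchedCyc, hsc])]
  exact hfeas.card_matchedCyc_le

lemma unused_eq_add_one (hs₀ : μ s₀ = none) (hc₀ : ∀ t, μ t ≠ some c₀) : c₀ = s₀ + 1 := by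
  by_contra hne
  have hprev : c₀ - 1 ≠ s₀ := fun h => hne (by rw [← h, sub_add_cancel])
  obtain ⟨c, hc⟩ := Option.ne_none_iff_exists'.mp (hnw.ne_none_of_ne hfeas hs₀ hprev)
  have hfav : rankS (c₀ - 1) c₀ = 0 := rankS_eq_zero_iff.mpr (sub_add_cancel c₀ 1).symm
  have hcc₀ : c = c₀ := by
    have := hnw.rankS_le_of_unused hfeas hc hc₀
    rwa [hfav, Nat.le_zero, rankS_eq_zero_iff, sub_add_cancel] at this
  exact hc₀ _ (hcc₀ ▸ hc)

lemma envyCyc_of_ne (hs₀ : μ s₀ = none) (ht : t ≠ s₀) : EnvyCyc μ s₀ t := by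
  obtain ⟨c₀, hc₀⟩ := hfeas.exists_unused
  obtain ⟨c, hc⟩ := Option.ne_none_iff_exists'.mp (hnw.ne_none_of_ne hfeas hs₀ ht)
  refine ⟨c, hc, .inl hs₀, rankC_lt_of_rankS_lt ht ?_⟩
  have hcc₀ : c ≠ c₀ := fun h => hc₀ t (h ▸ hc)
  rw [← hnw.unused_eq_add_one hfeas hs₀ hc₀]
  exact (hnw.rankS_le_of_unused hfeas hc hc₀).lt_of_ne ((rankS_injective t).ne hcc₀)

end NWCyc

end CyclicMarket

lemma Set.card_sub_one_le_ncard_of_compl_singleton_subset {α : Type*} [Finite α] {a : α}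
    {S : Set α} (h : {a}ᶜ ⊆ S) :
    Nat.card α - 1 ≤ S.ncard := by
  rw [← Set.ncard_singleton a, ← Set.ncard_compl]
  exact Set.ncard_le_ncard h

theorem stmt11_general (n : ℕ) (μ : Fin (n + 1) → Option (Fin (n + 1)))
    (hfeas : FeasCyc μ) (hnw : NWCyc μ) :
    (∃ s, μ s = none ∧ (∀ t, t ≠ s → μ t ≠ none) ∧ ∀ t, t ≠ s → EnvyCyc μ s t) ∧
      ∀ k, k < n → ∃ s, k < Set.ncard {t | EnvyCyc μ s t} := by
  obtain ⟨s₀, hs₀⟩ := hfeas.exists_unmatched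
  have henvy : ∀ t, t ≠ s₀ → EnvyCyc μ s₀ t := fun t ht => hnw.envyCyc_of_ne hfeas hs₀ ht
  refine ⟨⟨s₀, hs₀, fun t ht => hnw.ne_none_of_ne hfeas hs₀ ht, henvy⟩, fun k hk => ⟨s₀, ?_⟩⟩
  have := Set.card_sub_one_le_ncard_of_compl_singleton_subset (S := {t | EnvyCyc μ s₀ t}) henvy
  rw [Nat.card_fin, Nat.add_sub_cancel] at this
  omega

/-- In the cyclic market with `n + 1 ≥ 2` students, every feasible nonwasteful
matching leaves exactly one student unmatched, and that student has justified
envy toward all other `n` students; consequently no matching is both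
nonwasteful and EF-`k` for any `k < n` (the number of students minus one). -/
theorem stmt11 (n : ℕ) (hn : 1 ≤ n) (μ : Fin (n + 1) → Option (Fin (n + 1)))
    (hfeas : FeasCyc μ) (hnw : NWCyc μ) :
    (∃ s, μ s = none ∧ (∀ t, t ≠ s → μ t ≠ none) ∧ ∀ t, t ≠ s → EnvyCyc μ s t) ∧
      ∀ k, k < n → ∃ s, k < Set.ncard {t | EnvyCyc μ s t} :=
  stmt11_general n μ hfeas hnw
end

section
/- The greedy algorithm that repeatedly removes from G = (S, E) a vertex of minimum out-degree and places it at the top of the master-list (building L from bottom to top, recording k as the maximum of the out-degrees at removal times) produces a master-list L minimizing max_{s ∈ S} d(L,s) over all master-lists. -/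
/-- Edge of the disagreement graph `G = (S, E)`: `(s, s') ∈ E` iff some college
`c` satisfies `s ≻_c s' ≻_c ∅`. -/
def GEdge {S C : Type*} (X : S → C → Prop) (cpref : C → S → S → Prop) (s s' : S) : Prop :=
  ∃ c, X s c ∧ X s' c ∧ cpref c s s'

/-- Out-degree of `s` within the set of vertices listed in `l`. -/
noncomputable def outdegIn {S : Type*} (E : S → S → Prop) (l : List S) (s : S) : ℕ :=
  Set.ncard {t | t ∈ l ∧ E s t}

/-- `d(L, s)`: the number of out-edges of `s` going to students ranked higher
(earlier) than `s` in the master-list `L`. -/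
noncomputable def dE {S : Type*} [DecidableEq S] (E : S → S → Prop) (L : List S) (s : S) : ℕ :=
  Set.ncard {t | L.idxOf t < L.idxOf s ∧ E s t}


section Aux
variable {S : Type*} [DecidableEq S]

lemma mem_take_iff_idx {l : List S} (hnd : l.Nodup) {t : S} (ht : t ∈ l) (n : ℕ) :
    t ∈ l.take n ↔ l.idxOf t < n := by
  constructor
  · intro h
    obtain ⟨i, hi, hgi⟩ := List.getElem_of_mem h
    have hlen : i < l.length := lt_of_lt_of_le hi (by simp [List.length_take])
    have hin : i < n := lt_of_lt_of_le hi (by simp [List.length_take])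
    have hg : l[i] = t := by rw [← hgi]; exact (List.getElem_take ..).symm
    have : l.idxOf t = i := by rw [← hg]; exact List.Nodup.idxOf_getElem hnd i hlen
    omega
  · intro h
    have hlt : l.idxOf t < l.length := List.idxOf_lt_length_iff.2 ht
    have : (l.take n)[l.idxOf t]'(by simp [List.length_take]; omega) = t := by
      rw [List.getElem_take]; exact List.getElem_idxOf hlt
    exact this ▸ List.getElem_mem _

lemma dE_eq_outdegIn {E : S → S → Prop} (hirr : ∀ s, ¬ E s s)
    {L : List S} (hnd : L.Nodup) (hall : ∀ s, s ∈ L) (s : S) :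
    dE E L s = outdegIn E (L.take (L.idxOf s + 1)) s := by
  unfold dE outdegIn
  congr 1
  ext t
  simp only [Set.mem_setOf_eq, mem_take_iff_idx hnd (hall t)]
  constructor
  · rintro ⟨h1, h2⟩; exact ⟨by omega, h2⟩
  · rintro ⟨h1, h2⟩
    refine ⟨?_, h2⟩
    have hts : t ≠ s := fun h => hirr s (h ▸ h2)
    have : L.idxOf t ≠ L.idxOf s := fun h =>
      hts (by rw [← List.getElem_idxOf (List.idxOf_lt_length_iff.2 (hall t)),
        ← List.getElem_idxOf (List.idxOf_lt_length_iff.2 (hall s))]; congr 1)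
    omega

end Aux

/-- The greedy algorithm (repeatedly remove a vertex of minimum out-degree in
the remaining graph and prepend it to the list) produces a master-list `L`
minimizing `max_s d(L, s)` over all master-lists; moreover this minimum equals
the recorded value `k`, the maximum over removal steps of the out-degree of the
removed vertex at removal time.  Here `L.take (L.idxOf s + 1)` is exactly the
set of vertices remaining when `s` was removed. -/
theorem stmt16 {S C : Type*} [Fintype S] [DecidableEq S]
    (X : S → C → Prop) (cpref : C → S → S → Prop)
    (hcirr : ∀ c s, ¬ cpref c s s)
    (L : List S) (hnd : L.Nodup) (hall : ∀ s, s ∈ L)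
    -- `L` is a possible output of the greedy algorithm: each student has
    -- minimum out-degree within the set of vertices remaining at her removal
    (hgreedy : ∀ s : S, ∀ s' ∈ L.take (L.idxOf s + 1),
      outdegIn (GEdge X cpref) (L.take (L.idxOf s + 1)) s ≤
        outdegIn (GEdge X cpref) (L.take (L.idxOf s + 1)) s') :
    (∀ L' : List S, L'.Nodup → (∀ s, s ∈ L') →
        Finset.univ.sup (dE (GEdge X cpref) L) ≤ Finset.univ.sup (dE (GEdge X cpref) L')) ∧
      Finset.univ.sup (dE (GEdge X cpref) L) =
        Finset.univ.sup (fun s : S =>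
          outdegIn (GEdge X cpref) (L.take (L.idxOf s + 1)) s) := by
  classical
  set E := GEdge X cpref with hE
  have hirr : ∀ s, ¬ E s s := by
    rintro s ⟨c, _, _, h⟩; exact hcirr c s h
  have hpt : ∀ s, dE E L s = outdegIn E (L.take (L.idxOf s + 1)) s :=
    dE_eq_outdegIn hirr hnd hall
  have heq : Finset.univ.sup (dE E L) =
      Finset.univ.sup (fun s : S => outdegIn E (L.take (L.idxOf s + 1)) s) := by
    apply Finset.sup_congr rfl
    intro s _; exact hpt s
  refine ⟨?_, heq⟩
  intro L' hnd' hall'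
  rcases isEmpty_or_nonempty S with hS | hS
  · simp
  obtain ⟨sstar, -, hsstar⟩ := Finset.exists_mem_eq_sup Finset.univ
    Finset.univ_nonempty (dE E L)
  set k := Finset.univ.sup (dE E L) with hk
  set T := L.take (L.idxOf sstar + 1) with hT
  -- every vertex in T has out-degree ≥ k within T
  have hTmin : ∀ s' ∈ T, k ≤ outdegIn E T s' := by
    intro s' hs'
    calc k = dE E L sstar := hsstar
      _ = outdegIn E T sstar := hpt sstar
      _ ≤ outdegIn E T s' := hgreedy sstar s' hs'
  -- pick v ∈ T maximizing L'.idxOf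
  have hTne : sstar ∈ T := by
    rw [hT, mem_take_iff_idx hnd (hall sstar)]; omega
  have hTfin : {t | t ∈ T}.Finite := Set.toFinite _
  obtain ⟨v, hvT, hvmax⟩ := Set.Finite.exists_maximalFor (fun t => L'.idxOf t)
    {t | t ∈ T} hTfin ⟨sstar, hTne⟩
  have hvmax' : ∀ t ∈ T, t ≠ v → L'.idxOf t < L'.idxOf v := by
    intro t ht htv
    have hne : L'.idxOf t ≠ L'.idxOf v := fun h =>
      htv (by rw [← List.getElem_idxOf (List.idxOf_lt_length_iff.2 (hall' t)),
        ← List.getElem_idxOf (List.idxOf_lt_length_iff.2 (hall' v))]; congr 1)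
    rcases lt_or_ge (L'.idxOf t) (L'.idxOf v) with h | h
    · exact h
    · exact absurd (le_antisymm (hvmax ht h) h) hne
  have hsub : {t | t ∈ T ∧ E v t} ⊆ {t | L'.idxOf t < L'.idxOf v ∧ E v t} := by
    rintro t ⟨ht, he⟩
    have htv : t ≠ v := fun h => hirr v (h ▸ he)
    exact ⟨hvmax' t ht htv, he⟩
  have hle : outdegIn E T v ≤ dE E L' v :=
    Set.ncard_le_ncard hsub (Set.toFinite _)
  calc k ≤ outdegIn E T v := hTmin v hvT
    _ ≤ dE E L' v := hle
    _ ≤ Finset.univ.sup (dE E L') := Finset.le_sup (Finset.mem_univ v)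
end
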